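/- If m : (0,∞) → ℝ is differentiable and satisfies m'(r) + m(r)²/(n-1) + K(r) ≤ 0 for all r > 0, where K is continuous, then for every t > 0, t²·m(t) + (1/(n-1))·∫₀ᵗ (m(r)·r - (n-1))² dr + ∫₀ᵗ r²·K(r) dr ≤ (n-1)·t, provided r·m(r) → n-1 as r → 0⁺ and all integrals converge. -/

import Mathlib

/-!
Multiplying the Riccati inequality by `r²` and completing the square gives, for `r > 0`,
`(r² m)' + (1/c) (r m - c)² - c + r² K = r² (m' + m²/c + K) ≤ 0`.
Since `r m` stays bounded near `0`, the function `r² m` extends continuously by `0` at `r = 0`,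
and integrating over `[0, t]` by the fundamental theorem of calculus yields the estimate.
-/

open intervalIntegral Filter Set Topology

lemma sq_mul_riccati_eq {c : ℝ} (hc : c ≠ 0) (r m m' k : ℝ) :
    r ^ 2 * (m' + m ^ 2 / c + k)
      = (2 * (r * m) + r ^ 2 * m') + ((1 / c) * (m * r - c) ^ 2 - c + r ^ 2 * k) := by
  field_simp
  ring

lemma tendsto_sq_mul_nhdsGT_zero {m : ℝ → ℝ} {L : ℝ}
    (hlim : Tendsto (fun r => r * m r) (𝓝[>] 0) (𝓝 L)) :
    Tendsto (fun r => r ^ 2 * m r) (𝓝[>] 0) (𝓝 0) := by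
  have := (tendsto_nhdsWithin_of_tendsto_nhds tendsto_id).mul hlim
  simpa only [id, zero_mul, sq, mul_assoc] using this

lemma continuousOn_sq_mul_Icc {m : ℝ → ℝ} {L t : ℝ} (hm : ∀ r ∈ Ioc 0 t, ContinuousAt m r)
    (hlim : Tendsto (fun r => r * m r) (𝓝[>] 0) (𝓝 L)) :
    ContinuousOn (fun r => r ^ 2 * m r) (Icc 0 t) := by
  intro r hr
  rcases hr.1.eq_or_lt with rfl | hr0
  · have hGT : ContinuousWithinAt (fun r => r ^ 2 * m r) (Ioi 0) 0 := by
      simpa [ContinuousWithinAt] using tendsto_sq_mul_nhdsGT_zero hlim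
    exact (continuousWithinAt_Ioi_iff_Ici.mp hGT).mono Icc_subset_Ici_self
  · exact (((continuous_pow 2).continuousAt).mul (hm r ⟨hr0, hr.2⟩)).continuousWithinAt

lemma integral_deriv_sq_mul {m m' : ℝ → ℝ} {L t : ℝ} (ht : 0 ≤ t)
    (hderiv : ∀ r ∈ Ioc 0 t, HasDerivAt m (m' r) r)
    (hlim : Tendsto (fun r => r * m r) (𝓝[>] 0) (𝓝 L))
    (hint : IntervalIntegrable (fun r => 2 * (r * m r) + r ^ 2 * m' r)
      MeasureTheory.volume 0 t) :
    ∫ r in 0..t, (2 * (r * m r) + r ^ 2 * m' r) = t ^ 2 * m t := by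
  have hcont := continuousOn_sq_mul_Icc (fun r hr => (hderiv r hr).continuousAt) hlim
  rw [integral_eq_sub_of_hasDerivAt_of_le ht hcont (fun r hr => ?_) hint]
  · simp
  · exact ((hasDerivAt_pow 2 r).mul (hderiv r (Ioo_subset_Ioc_self hr))).congr_deriv (by ring)

theorem riccati_integral_le {c L t : ℝ} {m m' K : ℝ → ℝ} (hc : c ≠ 0) (ht : 0 ≤ t)
    (hderiv : ∀ r ∈ Ioc 0 t, HasDerivAt m (m' r) r)
    (hineq : ∀ r ∈ Ioo 0 t, m' r + m r ^ 2 / c + K r ≤ 0)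
    (hlim : Tendsto (fun r => r * m r) (𝓝[>] 0) (𝓝 L))
    (hsq : IntervalIntegrable (fun r => (m r * r - c) ^ 2) MeasureTheory.volume 0 t)
    (hm' : IntervalIntegrable (fun r => r ^ 2 * m' r) MeasureTheory.volume 0 t)
    (hm : IntervalIntegrable (fun r => r * m r) MeasureTheory.volume 0 t)
    (hK : IntervalIntegrable (fun r => r ^ 2 * K r) MeasureTheory.volume 0 t) :
    t ^ 2 * m t + (1 / c) * (∫ r in 0..t, (m r * r - c) ^ 2) + (∫ r in 0..t, r ^ 2 * K r)
      ≤ c * t := by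
  have hG : IntervalIntegrable (fun r => 2 * (r * m r) + r ^ 2 * m' r) MeasureTheory.volume 0 t :=
    (hm.const_mul 2).add hm'
  have hrest : IntervalIntegrable (fun r => (1 / c) * (m r * r - c) ^ 2 - c + r ^ 2 * K r)
      MeasureTheory.volume 0 t :=
    ((hsq.const_mul _).sub intervalIntegrable_const).add hK
  have hnonpos : ∫ r in 0..t, r ^ 2 * (m' r + m r ^ 2 / c + K r) ≤ 0 := by
    have hint : IntervalIntegrable (fun r => r ^ 2 * (m' r + m r ^ 2 / c + K r))
        MeasureTheory.volume 0 t := by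
      simpa only [sq_mul_riccati_eq hc] using hG.add hrest
    simpa using integral_mono_on_of_le_Ioo ht hint intervalIntegrable_const
      (fun r hr => mul_nonpos_of_nonneg_of_nonpos (sq_nonneg r) (hineq r hr))
  simp only [sq_mul_riccati_eq hc] at hnonpos
  rw [integral_add hG hrest, integral_deriv_sq_mul ht hderiv hlim hG,
    integral_add ((hsq.const_mul _).sub intervalIntegrable_const) hK,
    integral_sub (hsq.const_mul _) intervalIntegrable_const, integral_const_mul,
    integral_const, smul_eq_mul, sub_zero] at hnonpos
  linarith

/-- Riccati comparison: if `m' + m²/(n-1) + K ≤ 0` on `(0,∞)`, `K` continuous,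
`r * m r → n - 1` as `r → 0⁺`, then for every `t > 0` (with the relevant
integrals converging),
`t² m(t) + (1/(n-1)) ∫₀ᵗ (m(r) r - (n-1))² dr + ∫₀ᵗ r² K(r) dr ≤ (n-1) t`. -/
theorem stmt_1 (n : ℕ) (hn : 2 ≤ n) (m m' K : ℝ → ℝ)
    (hK : Continuous K)
    (hderiv : ∀ r : ℝ, 0 < r → HasDerivAt m (m' r) r)
    (hineq : ∀ r : ℝ, 0 < r → m' r + (m r) ^ 2 / ((n : ℝ) - 1) + K r ≤ 0)
    (hlim : Tendsto (fun r => r * m r) (nhdsWithin 0 (Ioi 0)) (nhds ((n : ℝ) - 1))) :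
    ∀ t : ℝ, 0 < t →
      IntervalIntegrable (fun r => (m r * r - ((n : ℝ) - 1)) ^ 2) MeasureTheory.volume 0 t →
      IntervalIntegrable (fun r => r ^ 2 * m' r) MeasureTheory.volume 0 t →
      IntervalIntegrable (fun r => r * m r) MeasureTheory.volume 0 t →
      t ^ 2 * m t + (1 / ((n : ℝ) - 1)) * (∫ r in (0:ℝ)..t, (m r * r - ((n : ℝ) - 1)) ^ 2)
          + (∫ r in (0:ℝ)..t, r ^ 2 * K r) ≤ ((n : ℝ) - 1) * t := by
  intro t ht hsq hm' hm
  have hc : (n : ℝ) - 1 ≠ 0 := by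
    have : (2 : ℝ) ≤ n := by exact_mod_cast hn
    linarith
  exact riccati_integral_le hc ht.le (fun r hr => hderiv r hr.1) (fun r hr => hineq r hr.1) hlim
    hsq hm' hm (((continuous_pow 2).mul hK).intervalIntegrable 0 t)
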